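/- Let λ : [0,∞) → [0,∞) be continuous with Λ(t) = ∫_0^t λ(u) du and Λ(∞) = ∞, let T have density λ(s)e^{−Λ(s)}, let T_0 be exponential with rate 1, and fix C > 0. Define T̃ = min(T, C), δ = 1_{T ≤ C}, and similarly T̃_0, δ_0 for T_0. Then for every bounded measurable g : ℝ × {0,1} → ℝ, E[g(T̃, δ)] = E[g(T̃_0, δ_0) · λ(T̃_0)^{δ_0} e^{−Λ(T̃_0)} e^{T̃_0}]. -/

import Mathlib

open MeasureTheory ProbabilityTheory Set Filter Real Topology

/-! The observation `(min T C, T ≤ C)` of a lifetime with hazard `λ` has density `λ(s) e^{-Λ(s)}`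
on `(0, C] × {true}` and an atom of mass `∫_C^∞ λ e^{-Λ} = e^{-Λ(C)}` at `(C, false)`, the last
identity because `-e^{-Λ}` is a primitive of `λ e^{-Λ}` vanishing at infinity. The unit exponential
is the case `λ = 1`, `Λ(t) = t`, and multiplying its density `e^{-s}` and atom `e^{-C}` by
`λ(s)^δ e^{-Λ(s)} e^{s}` gives exactly the density and atom of the observation of `T`. -/

noncomputable def hazardMeasure (lam Lam : ℝ → ℝ) : Measure ℝ :=
  (volume.restrict (Ioi 0)).withDensity fun s => ENNReal.ofReal (lam s * exp (-Lam s))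

section Hazard

variable {lam Lam : ℝ → ℝ}

theorem hasDerivAt_neg_exp_neg (hLam : ∀ s, HasDerivAt Lam (lam s) s) (s : ℝ) :
    HasDerivAt (fun t => -exp (-Lam t)) (lam s * exp (-Lam s)) s :=
  (hLam s).fun_neg.exp.fun_neg.congr_deriv (by ring)

theorem tendsto_neg_exp_neg_atTop (hLam_top : Tendsto Lam atTop atTop) :
    Tendsto (fun t => -exp (-Lam t)) atTop (𝓝 0) := by
  simpa using (tendsto_exp_atBot.comp (tendsto_neg_atBot_iff.2 hLam_top)).neg

theorem integrableOn_Ioi_hazard (hLam : ∀ s, HasDerivAt Lam (lam s) s) (hlam : ∀ s, 0 ≤ lam s)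
    (hLam_top : Tendsto Lam atTop atTop) (a : ℝ) :
    IntegrableOn (fun s => lam s * exp (-Lam s)) (Ioi a) :=
  integrableOn_Ioi_deriv_of_nonneg' (fun s _ => hasDerivAt_neg_exp_neg hLam s)
    (fun s _ => mul_nonneg (hlam s) (exp_nonneg _)) (tendsto_neg_exp_neg_atTop hLam_top)

theorem integral_Ioi_hazard (hLam : ∀ s, HasDerivAt Lam (lam s) s) (hlam : ∀ s, 0 ≤ lam s)
    (hLam_top : Tendsto Lam atTop atTop) (a : ℝ) :
    ∫ s in Ioi a, lam s * exp (-Lam s) = exp (-Lam a) := by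
  simpa using integral_Ioi_of_hasDerivAt_of_nonneg' (fun s _ => hasDerivAt_neg_exp_neg hLam s)
    (fun s _ => mul_nonneg (hlam s) (exp_nonneg _)) (tendsto_neg_exp_neg_atTop hLam_top)

theorem integral_hazardMeasure (hlam_meas : Measurable lam) (hLam_meas : Measurable Lam)
    (hlam : ∀ s, 0 ≤ lam s) (f : ℝ → ℝ) :
    ∫ s, f s ∂hazardMeasure lam Lam = ∫ s in Ioi 0, lam s * exp (-Lam s) * f s := by
  rw [hazardMeasure, integral_withDensity_eq_integral_toReal_smul (by fun_prop)
    (ae_of_all _ fun _ => ENNReal.ofReal_lt_top)]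
  simp_rw [ENNReal.toReal_ofReal (mul_nonneg (hlam _) (exp_nonneg _)), smul_eq_mul]

theorem integral_censored_hazardMeasure (hLam : ∀ s, HasDerivAt Lam (lam s) s)
    (hlam : ∀ s, 0 ≤ lam s) (hLam_top : Tendsto Lam atTop atTop) {C : ℝ} (hC : 0 ≤ C)
    (h : ℝ → Bool → ℝ) (hint : IntegrableOn (fun s => lam s * exp (-Lam s) * h s true) (Ioc 0 C)) :
    ∫ s, h (min s C) (decide (s ≤ C)) ∂hazardMeasure lam Lam =
      (∫ s in Ioc 0 C, lam s * exp (-Lam s) * h s true) + exp (-Lam C) * h C false := by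
  have hLam_cont : Continuous Lam := continuous_iff_continuousAt.2 fun s => (hLam s).continuousAt
  have hlam_meas : Measurable lam := funext (fun s => (hLam s).deriv) ▸ measurable_deriv Lam
  have hobserved : ∀ s ∈ Ioc 0 C, lam s * exp (-Lam s) * h (min s C) (decide (s ≤ C)) =
      lam s * exp (-Lam s) * h s true := fun s hs => by simp [hs.2]
  have hcensored : ∀ s ∈ Ioi C, lam s * exp (-Lam s) * h (min s C) (decide (s ≤ C)) =
      h C false * (lam s * exp (-Lam s)) := fun s (hs : C < s) => by
    simp [min_eq_right hs.le, not_le.2 hs, mul_comm]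
  rw [integral_hazardMeasure hlam_meas hLam_cont.measurable hlam, ← Ioc_union_Ioi_eq_Ioi hC,
    setIntegral_union (Ioc_disjoint_Ioi le_rfl) measurableSet_Ioi
      (hint.congr_fun (fun s hs => (hobserved s hs).symm) measurableSet_Ioc)
      (IntegrableOn.congr_fun ((integrableOn_Ioi_hazard hLam hlam hLam_top C).const_mul _)
        (fun s hs => (hcensored s hs).symm) measurableSet_Ioi),
    setIntegral_congr_fun measurableSet_Ioc hobserved,
    setIntegral_congr_fun measurableSet_Ioi hcensored, integral_const_mul,
    integral_Ioi_hazard hLam hlam hLam_top, mul_comm]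

end Hazard

theorem measurable_censored {h : ℝ → Bool → ℝ} (hh : ∀ b, Measurable (h · b)) (C : ℝ) :
    Measurable fun s => h (min s C) (decide (s ≤ C)) := by
  have hδ : Measurable fun s : ℝ => decide (s ≤ C) := measurable_to_bool <| by
    simp only [preimage, mem_singleton_iff, decide_eq_true_eq]; exact measurableSet_Iic
  exact (measurable_from_prod_countable_left (f := Function.uncurry h) hh).comp
    ((measurable_id.min measurable_const).prodMk hδ)

theorem expMeasure_eq_hazardMeasure (r : ℝ) :
    expMeasure r = hazardMeasure (fun _ => r) (fun t => r * t) := by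
  rw [hazardMeasure, ← withDensity_indicator measurableSet_Ioi, expMeasure, gammaMeasure]
  refine withDensity_congr_ae ?_
  filter_upwards [measure_eq_zero_iff_ae_notMem.1 (measure_singleton (μ := volume) (0 : ℝ))]
    with s hs
  rcases (show s ≠ 0 from hs).lt_or_gt with hs | hs
  · simp [gammaPDF_of_neg hs, hs.not_gt]
  · simp [gammaPDF_of_nonneg hs.le, hs]

theorem integral_censored_expMeasure {r : ℝ} (hr : 0 < r) {C : ℝ} (hC : 0 ≤ C)
    (h : ℝ → Bool → ℝ) (hint : IntegrableOn (fun s => r * exp (-(r * s)) * h s true) (Ioc 0 C)) :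
    ∫ s, h (min s C) (decide (s ≤ C)) ∂expMeasure r =
      (∫ s in Ioc 0 C, r * exp (-(r * s)) * h s true) + exp (-(r * C)) * h C false := by
  rw [expMeasure_eq_hazardMeasure]
  exact integral_censored_hazardMeasure (fun _ => hasDerivAt_const_mul r) (fun _ => hr.le)
    (tendsto_id.const_mul_atTop hr) hC h hint

theorem censored_likelihood_ratio_general
    {Ω : Type*} [MeasurableSpace Ω] {μ : Measure Ω}
    {Ω₀ : Type*} [MeasurableSpace Ω₀] {μ₀ : Measure Ω₀}
    (lam : ℝ → ℝ) (hlam_nonneg : ∀ u, 0 ≤ lam u) (hlam_cont : Continuous lam)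
    (Lam : ℝ → ℝ) (hLam : ∀ t, Lam t = ∫ u in (0:ℝ)..t, lam u)
    (hLam_top : Filter.Tendsto Lam Filter.atTop Filter.atTop)
    (T : Ω → ℝ) (hT : Measurable T)
    (hlawT : Measure.map T μ =
      (volume.restrict (Set.Ioi (0:ℝ))).withDensity
        (fun s => ENNReal.ofReal (lam s * Real.exp (-(Lam s)))))
    (T₀ : Ω₀ → ℝ) (hT₀ : Measurable T₀)
    (hlawT₀ : Measure.map T₀ μ₀ = expMeasure 1)
    (C : ℝ) (hC : 0 < C)
    (g : ℝ → Bool → ℝ) (hg : ∀ b, Measurable (fun x => g x b))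
    (hbdd : ∃ M, ∀ x b, |g x b| ≤ M) :
    ∫ ω, g (min (T ω) C) (decide (T ω ≤ C)) ∂μ =
      ∫ ω, g (min (T₀ ω) C) (decide (T₀ ω ≤ C)) *
        (if T₀ ω ≤ C then lam (min (T₀ ω) C) else 1) *
        Real.exp (-(Lam (min (T₀ ω) C))) * Real.exp (min (T₀ ω) C) ∂μ₀ := by
  obtain ⟨M, hM⟩ := hbdd
  have hLam_deriv : ∀ s, HasDerivAt Lam (lam s) s := fun s => by
    rw [funext hLam]; exact (hlam_cont.integral_hasStrictDerivAt 0 s).hasDerivAt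
  have hLam_cont : Continuous Lam := continuous_iff_continuousAt.2 (hLam_deriv · |>.continuousAt)
  have hint : IntegrableOn (fun s => lam s * exp (-Lam s) * g s true) (Ioc 0 C) :=
    ((hlam_cont.mul hLam_cont.neg.rexp).integrableOn_Icc.mono_set Ioc_subset_Icc_self).mul_bdd
      (hg true).aestronglyMeasurable (ae_of_all _ (hM · true))
  set G : ℝ → Bool → ℝ := fun x b => g x b * (if b then lam x else 1) * exp (-Lam x) * exp x
  have hG : ∀ b, Measurable (G · b) := fun b => by
    cases b <;> simp only [G, Bool.false_eq_true, ↓reduceIte] <;> fun_prop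
  have hG_true : ∀ s, 1 * exp (-(1 * s)) * G s true = lam s * exp (-Lam s) * g s true := fun s => by
    simp only [G, ↓reduceIte, one_mul, exp_neg]; field_simp
  have hG_false : exp (-(1 * C)) * G C false = exp (-Lam C) * g C false := by
    simp only [G, Bool.false_eq_true, ↓reduceIte, one_mul, exp_neg]; field_simp
  calc ∫ ω, g (min (T ω) C) (decide (T ω ≤ C)) ∂μ
      = ∫ s, g (min s C) (decide (s ≤ C)) ∂hazardMeasure lam Lam := by
        rw [hazardMeasure, ← hlawT, integral_map hT.aemeasurable
          (measurable_censored hg C).aestronglyMeasurable]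
    _ = (∫ s in Ioc 0 C, lam s * exp (-Lam s) * g s true) + exp (-Lam C) * g C false :=
        integral_censored_hazardMeasure hLam_deriv hlam_nonneg hLam_top hC.le g hint
    _ = ∫ s, G (min s C) (decide (s ≤ C)) ∂expMeasure 1 := by
        rw [integral_censored_expMeasure one_pos hC.le G (by simpa only [hG_true] using hint),
          hG_false]
        simp only [hG_true]
    _ = _ := by
        rw [← hlawT₀, integral_map hT₀.aemeasurable (measurable_censored hG C).aestronglyMeasurable]
        simp only [G, decide_eq_true_eq]

/-- Univariate Jacod likelihood-ratio formula for a censored one-jump counting process: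
if `T` has hazard `λ` (density `λ(s)e^(-Λ(s))` on `(0,∞)`, `Λ(∞) = ∞`), `T₀` is a
unit-rate exponential, and observations are right-censored at `C`, then
`E[g(T̃, δ)] = E[g(T̃₀, δ₀) λ(T̃₀)^δ₀ e^(-Λ(T̃₀)) e^(T̃₀)]`. -/
theorem censored_likelihood_ratio
    {Ω : Type*} [MeasurableSpace Ω] {μ : Measure Ω} [IsProbabilityMeasure μ]
    {Ω₀ : Type*} [MeasurableSpace Ω₀] {μ₀ : Measure Ω₀} [IsProbabilityMeasure μ₀]
    (lam : ℝ → ℝ) (hlam_nonneg : ∀ u, 0 ≤ lam u) (hlam_cont : Continuous lam)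
    (Lam : ℝ → ℝ) (hLam : ∀ t, Lam t = ∫ u in (0:ℝ)..t, lam u)
    (hLam_top : Filter.Tendsto Lam Filter.atTop Filter.atTop)
    (T : Ω → ℝ) (hT : Measurable T)
    (hlawT : Measure.map T μ =
      (volume.restrict (Set.Ioi (0:ℝ))).withDensity
        (fun s => ENNReal.ofReal (lam s * Real.exp (-(Lam s)))))
    (T₀ : Ω₀ → ℝ) (hT₀ : Measurable T₀)
    (hlawT₀ : Measure.map T₀ μ₀ = expMeasure 1)
    (C : ℝ) (hC : 0 < C)
    (g : ℝ → Bool → ℝ) (hg : ∀ b, Measurable (fun x => g x b))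
    (hbdd : ∃ M, ∀ x b, |g x b| ≤ M) :
    ∫ ω, g (min (T ω) C) (decide (T ω ≤ C)) ∂μ =
      ∫ ω, g (min (T₀ ω) C) (decide (T₀ ω ≤ C)) *
        (if T₀ ω ≤ C then lam (min (T₀ ω) C) else 1) *
        Real.exp (-(Lam (min (T₀ ω) C))) * Real.exp (min (T₀ ω) C) ∂μ₀ :=
  censored_likelihood_ratio_general lam hlam_nonneg hlam_cont Lam hLam hLam_top T hT hlawT T₀ hT₀
    hlawT₀ C hC g hg hbdd
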